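/- arXiv:1402.4072 — 2 statements merged into one kernel-verified Lean document; each statement's English description precedes it below -/
import Mathlib

section
/- For bilinear forms h and k on an n-dimensional Euclidean space, viewed as (1,1) double forms, the p-th exterior power (in the exterior algebra of double forms) satisfies h^p ∘ k^p = p!·(h ∘ k)^p, where ∘ is the composition product of double forms. -/
/-
Double forms on the Euclidean space ℝⁿ, following Labbi's formalism.
A (p,q) double form is modelled as a real-valued function of a p-tuple and a
q-tuple of vectors (the relevant ones being those multilinear and alternating
in each block, i.e. bilinear forms on Λ^p V × Λ^q V).
-/

open scoped BigOperators RealInnerProductSpace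

noncomputable section

abbrev EucV (n : ℕ) := EuclideanSpace ℝ (Fin n)

/-- A (p,q) double form on ℝⁿ: a bilinear form on Λ^p V × Λ^q V, viewed as a
multilinear form skew-symmetric in the first p and in the last q arguments. -/
abbrev DF (n p q : ℕ) := (Fin p → EucV n) → (Fin q → EucV n) → ℝ

variable {n : ℕ}

/-- standard orthonormal basis of ℝⁿ -/
def bv (n : ℕ) (i : Fin n) : EucV n := EuclideanSpace.single i 1

/-- strictly increasing multi-indices of length p -/
def Incr (n p : ℕ) : Finset (Fin p → Fin n) :=
  Finset.univ.filter (fun f => ∀ a b : Fin p, a < b → f a < f b)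

/-- sign of a permutation, as a real number -/
def sgn {m : ℕ} (σ : Equiv.Perm (Fin m)) : ℝ := ((Equiv.Perm.sign σ : ℤ) : ℝ)

/-- exterior product of double forms:
(θ₁⊗θ₂)(θ₃⊗θ₄) = (θ₁∧θ₃)⊗(θ₂∧θ₄). -/
def extMul {p q r s : ℕ} (ω : DF n p q) (η : DF n r s) : DF n (p + r) (q + s) :=
  fun x y =>
    (p.factorial * r.factorial * q.factorial * s.factorial : ℝ)⁻¹ *
      ∑ σ : Equiv.Perm (Fin (p + r)), ∑ τ : Equiv.Perm (Fin (q + s)),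
        sgn σ * sgn τ *
          (ω (fun i => x (σ (Fin.castAdd r i))) (fun j => y (τ (Fin.castAdd s j))) *
            η (fun i => x (σ (Fin.natAdd p i))) (fun j => y (τ (Fin.natAdd q j))))

/-- composition (Greub) product of double forms: for ω₁ ∈ D^{p,q}, ω₂ ∈ D^{r,p},
(ω₁ ∘ ω₂)(u,v) = Σ_{i₁<…<i_p} ω₂(u, e_I) ω₁(e_I, v); it corresponds to the
composition of the associated operators on ΛV. -/
def compDF {p q r : ℕ} (ω₁ : DF n p q) (ω₂ : DF n r p) : DF n r q :=
  fun u v => ∑ f ∈ Incr n p, ω₂ u (fun i => bv n (f i)) * ω₁ (fun i => bv n (f i)) v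

/-- transpose of a double form -/
def transDF {p q : ℕ} (ω : DF n p q) : DF n q p := fun u v => ω v u

/-- re-indexing cast of a double form -/
def castDF {p q p' q' : ℕ} (hp : p = p') (hq : q = q') (ω : DF n p q) : DF n p' q' :=
  fun x y => ω (x ∘ Fin.cast hp) (y ∘ Fin.cast hq)

/-- Ricci contraction of double forms -/
def contractDF {p q : ℕ} (ω : DF n (p + 1) (q + 1)) : DF n p q :=
  fun x y => ∑ i : Fin n, ω (Fin.cons (bv n i) x) (Fin.cons (bv n i) y)

/-- iterated contraction c^k -/
def contractIterDF {p q : ℕ} : (k : ℕ) → DF n (p + k) (q + k) → DF n p q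
  | 0, ω => ω
  | k + 1, ω => contractIterDF k (contractDF ω)

/-- interior product i_ψ of double forms (the adjoint of left exterior
multiplication by ψ): for ψ ∈ D^{r,s} and ω ∈ D^{r+p,s+q},
(i_ψ ω)(x;y) = Σ_{I,J increasing} ψ(e_I;e_J) ω(e_I,x;e_J,y). -/
def interiorDF {r s p q : ℕ} (ψ : DF n r s) (ω : DF n (r + p) (s + q)) : DF n p q :=
  fun x y =>
    ∑ f ∈ Incr n r, ∑ g ∈ Incr n s,
      ψ (fun i => bv n (f i)) (fun j => bv n (g j)) *
        ω (Fin.append (fun i => bv n (f i)) x) (Fin.append (fun j => bv n (g j)) y)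

/-- inner product of (p,q) double forms, induced by the inner products of the
exterior powers -/
def innerDF {p q : ℕ} (ω η : DF n p q) : ℝ :=
  ∑ f ∈ Incr n p, ∑ g ∈ Incr n q,
    ω (fun i => bv n (f i)) (fun j => bv n (g j)) *
      η (fun i => bv n (f i)) (fun j => bv n (g j))

/-- the metric of ℝⁿ as a (1,1) double form -/
def gDF (n : ℕ) : DF n 1 1 := fun u v => (inner ℝ (u 0) (v 0) : ℝ)

/-- exterior powers of a (1,1) double form -/
def powDF (h : DF n 1 1) : (p : ℕ) → DF n p p
  | 0 => fun _ _ => 1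
  | p + 1 => extMul (powDF h p) h

/-- exterior product h₁h₂⋯h_p of a family of (1,1) double forms -/
def extProdDF : {p : ℕ} → (Fin p → DF n 1 1) → DF n p p
  | 0, _ => fun _ _ => 1
  | p + 1, h => extMul (extProdDF fun i => h i.castSucc) (h (Fin.last p))

/-- determinant (volume form) of an n-tuple of vectors of ℝⁿ -/
def volDF (n : ℕ) (v : Fin n → EucV n) : ℝ :=
  Matrix.det (Matrix.of fun i j => (inner ℝ (bv n i) (v j) : ℝ))

/-- double Hodge star operator on double forms:
*(θ₁⊗θ₂) = (*θ₁)⊗(*θ₂), given here by the classical formula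
(*α)(x) = Σ_{I increasing} α(e_I) vol(e_I, x) applied in each slot. -/
def starDF {p q : ℕ} (hp : p ≤ n) (hq : q ≤ n) (ω : DF n p q) : DF n (n - p) (n - q) :=
  fun x y =>
    ∑ f ∈ Incr n p, ∑ g ∈ Incr n q,
      ω (fun i => bv n (f i)) (fun j => bv n (g j)) *
        volDF n (Fin.append (fun i => bv n (f i)) x ∘ Fin.cast (Nat.add_sub_cancel' hp).symm) *
        volDF n (Fin.append (fun j => bv n (g j)) y ∘ Fin.cast (Nat.add_sub_cancel' hq).symm)

/-- the endomorphism h̄ associated to a bilinear form h: ⟪h̄ v, w⟫ = h(v,w) -/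
def hbar (h : DF n 1 1) (v : EucV n) : EucV n :=
  ∑ j : Fin n, h ![v] ![bv n j] • bv n j

/-- the adjoint endomorphism h̄*: ⟪v, h̄* w⟫ = h(v,w) -/
def hbarAdj (h : DF n 1 1) (v : EucV n) : EucV n :=
  ∑ i : Fin n, h ![bv n i] ![v] • bv n i

/-- the right extension ĥ_R = id ⊗ ĥ of (the exterior-algebra extension ĥ of) h̄,
acting on double forms via the metric identification with double vectors -/
def hhatR {p q : ℕ} (h : DF n 1 1) (ω : DF n p q) : DF n p q :=
  fun x y => ω x (fun j => hbarAdj h (y j))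

/-- determinant of (the endomorphism associated to) a bilinear form -/
def detDF (h : DF n 1 1) : ℝ :=
  Matrix.det (Matrix.of fun i j : Fin n => h ![bv n i] ![bv n j])

/-- omit one member of a family -/
def omit1 {α : Sort*} {p : ℕ} (h : Fin (p + 1) → α) (j : Fin (p + 1)) : Fin p → α :=
  fun i => h (j.succAbove i)

/-- omit two members of a family -/
def omit2 {α : Sort*} {p : ℕ} (h : Fin (p + 2) → α) (j k : Fin (p + 2)) (hjk : j < k) :
    Fin p → α :=
  omit1 (omit1 h k) ⟨j.1, by have h1 : j.1 < k.1 := hjk; have h2 : k.1 < p + 2 := k.isLt; omega⟩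

/-- the first Bianchi map 𝔖 : D^{p,q+1} → D^{p+1,q} -/
def bianchiDF {p q : ℕ} (ω : DF n p (q + 1)) : DF n (p + 1) q :=
  fun x y =>
    (p.factorial : ℝ)⁻¹ *
      ∑ σ : Equiv.Perm (Fin (p + 1)),
        sgn σ * ω (fun i => x (σ i.castSucc)) (Fin.cons (x (σ (Fin.last p))) y)

/-- the alternating operator Alt : D^{p,p} → Λ^{2p} -/
def altDF {p : ℕ} (ω : DF n p p) : (Fin (p + p) → EucV n) → ℝ :=
  fun v =>
    ((p + p).factorial : ℝ)⁻¹ *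
      ∑ σ : Equiv.Perm (Fin (p + p)),
        sgn σ * ω (fun i => v (σ (Fin.castAdd p i))) (fun i => v (σ (Fin.natAdd p i)))

/-- exterior powers of a (2,2) double form -/
def pow2DF (R : DF n 2 2) : (k : ℕ) → DF n (2 * k) (2 * k)
  | 0 => fun _ _ => 1
  | k + 1 => extMul (pow2DF R k) R

/-- the diagonal simple double form (v₁∧…∧v_p) ⊗ (v₁∧…∧v_p), as a bilinear form -/
def simpleDiag {p : ℕ} (v : Fin p → EucV n) : DF n p p :=
  fun x y =>
    Matrix.det (Matrix.of fun i j => (inner ℝ (v i) (x j) : ℝ)) *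
      Matrix.det (Matrix.of fun i j => (inner ℝ (v i) (y j) : ℝ))


/-!
The exterior power of a (1,1) double form is a determinant, `h^p(x, y) = p! det (h(xᵢ, yⱼ))`:
in each step of the induction the exterior product is a double alternating sum that collapses
to a determinant. So `(h^p ∘ k^p)(u, v)` is `(p!)²` times the Cauchy–Binet expansion
`∑_I det (k(uᵢ, e_{Iⱼ})) det (h(e_{Iᵢ}, vⱼ))` of the determinant of the matrix product
`((h ∘ k)(uᵢ, vⱼ))`, and that determinant is `(h ∘ k)^p(u, v) / p!`.
-/

open Matrix Equiv

theorem mem_Incr_iff {p : ℕ} {f : Fin p → Fin n} : f ∈ Incr n p ↔ StrictMono f := by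
  simp [Incr, StrictMono]

theorem sum_injective_eq_sum_Incr_sum_perm {M : Type*} [AddCommMonoid M] {p : ℕ}
    (F : (Fin p → Fin n) → M) :
    ∑ f with Function.Injective f, F f =
      ∑ g ∈ Incr n p, ∑ σ : Perm (Fin p), F (g ∘ σ) := by
  rw [← Finset.sum_product']
  refine Finset.sum_nbij' (fun f => (f ∘ Tuple.sort f, (Tuple.sort f)⁻¹))
    (fun gσ => gσ.1 ∘ gσ.2) ?_ ?_ ?_ ?_ ?_
  · intro f hf
    rw [Finset.mem_filter] at hf
    rw [Finset.mem_product, mem_Incr_iff]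
    exact ⟨(Tuple.monotone_sort f).strictMono_of_injective (hf.2.comp (Equiv.injective _)),
      Finset.mem_univ _⟩
  · rintro ⟨g, σ⟩ hgσ
    rw [Finset.mem_product, mem_Incr_iff] at hgσ
    simpa using hgσ.1.injective.comp σ.injective
  · intro f _
    ext i
    simp
  · rintro ⟨g, σ⟩ hgσ
    rw [Finset.mem_product, mem_Incr_iff] at hgσ
    have hsorted : (g ∘ σ) ∘ Tuple.sort (g ∘ σ) = g := by
      rw [Tuple.comp_perm_comp_sort_eq_comp_sort, Tuple.sort_eq_refl_iff_monotone.2 hgσ.1.monotone]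
      rfl
    have hσ : σ * Tuple.sort (g ∘ σ) = 1 := by
      ext1 i
      exact hgσ.1.injective (congrFun hsorted i)
    exact Prod.ext hsorted (eq_inv_of_mul_eq_one_left hσ).symm
  · intro f _
    congr
    ext i
    simp

section Determinant

variable {R : Type*} [CommRing R] {p : ℕ}

theorem sum_perm_sum_perm_sign_mul_prod {ι : Type*} [Fintype ι] [DecidableEq ι]
    (M : Matrix ι ι R) :
    ∑ σ : Perm ι, ∑ τ : Perm ι,
      ((Perm.sign σ : ℤ) : R) * ((Perm.sign τ : ℤ) : R) * ∏ i, M (σ i) (τ i) =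
      (Fintype.card ι).factorial * M.det := by
  have hcol (τ : Perm ι) : ∑ σ : Perm ι,
      ((Perm.sign σ : ℤ) : R) * ((Perm.sign τ : ℤ) : R) * ∏ i, M (σ i) (τ i) = M.det := by
    have h := det_permute' τ M
    rw [det_apply'] at h
    simp only [submatrix_apply, id] at h
    simp_rw [mul_right_comm _ ((Perm.sign τ : ℤ) : R), ← Finset.sum_mul, h]
    rw [mul_right_comm, ← Int.cast_mul, ← Units.val_mul, Int.units_mul_self, Units.val_one,
      Int.cast_one, one_mul]
  rw [Finset.sum_comm]
  simp [hcol, Fintype.card_perm]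

theorem det_submatrix_castSucc_mul_last (A : Matrix (Fin (p + 1)) (Fin (p + 1)) R) :
    (A.submatrix Fin.castSucc Fin.castSucc).det * A (Fin.last p) (Fin.last p) =
      ∑ π : Perm (Fin p), ((Perm.sign π : ℤ) : R) *
        ∏ j, A (π.viaFintypeEmbedding Fin.castSuccEmb j) j := by
  have hlast (π : Perm (Fin p)) :
      π.viaFintypeEmbedding Fin.castSuccEmb (Fin.last p) = Fin.last p :=
    Perm.viaFintypeEmbedding_apply_notMem_range _ _ (by simp [Fin.castSuccEmb, Fin.le_last])
  rw [det_apply', Finset.sum_mul]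
  refine Finset.sum_congr rfl fun π _ => ?_
  rw [Fin.prod_univ_castSucc, hlast, mul_assoc]
  congr 2
  refine Finset.prod_congr rfl fun i _ => ?_
  exact congrArg (A · i.castSucc) (Perm.viaFintypeEmbedding_apply_image π Fin.castSuccEmb i).symm

theorem sum_perm_sum_perm_sign_mul_det_submatrix_castSucc_mul_last
    (N : Matrix (Fin (p + 1)) (Fin (p + 1)) R) :
    ∑ σ : Perm (Fin (p + 1)), ∑ τ : Perm (Fin (p + 1)),
      ((Perm.sign σ : ℤ) : R) * ((Perm.sign τ : ℤ) : R) *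
        ((N.submatrix (σ ∘ Fin.castSucc) (τ ∘ Fin.castSucc)).det *
          N (σ (Fin.last p)) (τ (Fin.last p))) =
      p.factorial * (p + 1).factorial * N.det := by
  have hexpand (σ τ : Perm (Fin (p + 1))) :
      (N.submatrix (σ ∘ Fin.castSucc) (τ ∘ Fin.castSucc)).det *
        N (σ (Fin.last p)) (τ (Fin.last p)) =
      ∑ π : Perm (Fin p), ((Perm.sign π : ℤ) : R) *
        ∏ j, N (σ (π.viaFintypeEmbedding Fin.castSuccEmb j)) (τ j) :=
    det_submatrix_castSucc_mul_last (N.submatrix σ τ)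
  have hπ (π : Perm (Fin p)) :
      ∑ σ : Perm (Fin (p + 1)), ∑ τ : Perm (Fin (p + 1)),
        ((Perm.sign σ : ℤ) : R) * ((Perm.sign τ : ℤ) : R) * (((Perm.sign π : ℤ) : R) *
          ∏ j, N (σ (π.viaFintypeEmbedding Fin.castSuccEmb j)) (τ j)) =
      (p + 1).factorial * N.det := by
    refine .trans ?_ ((sum_perm_sum_perm_sign_mul_prod N).trans (by rw [Fintype.card_fin]))
    refine Fintype.sum_equiv (Equiv.mulRight (π.viaFintypeEmbedding Fin.castSuccEmb)) _ _
      fun σ => Finset.sum_congr rfl fun τ _ => ?_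
    simp only [Equiv.coe_mulRight, Perm.mul_apply, Perm.sign_mul, Perm.viaFintypeEmbedding_sign,
      Units.val_mul, Int.cast_mul]
    ring
  simp_rw [hexpand, Finset.mul_sum]
  rw [Finset.sum_congr rfl fun σ _ => Finset.sum_comm, Finset.sum_comm]
  simp only [hπ, Finset.sum_const, Finset.card_univ, Fintype.card_perm, Fintype.card_fin,
    nsmul_eq_mul]
  ring

theorem det_mul_eq_sum_det_submatrix_mul_prod {ι : Type*} [Fintype ι] [DecidableEq ι]
    (A : Matrix (Fin p) ι R) (B : Matrix ι (Fin p) R) :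
    (A * B).det = ∑ f : Fin p → ι, (A.submatrix id f).det * ∏ i, B (f i) i := by
  simp only [det_apply', mul_apply, Finset.prod_univ_sum, Finset.mul_sum, Fintype.piFinset_univ,
    Finset.sum_mul, Finset.prod_mul_distrib, submatrix_apply, id]
  rw [Finset.sum_comm]
  simp only [mul_assoc]

theorem det_mul_eq_sum_Incr (A : Matrix (Fin p) (Fin n) R) (B : Matrix (Fin n) (Fin p) R) :
    (A * B).det = ∑ g ∈ Incr n p, (A.submatrix id g).det * (B.submatrix g id).det := by
  have hnoninj (f : Fin p → Fin n) (hf : ¬ Function.Injective f) :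
      (A.submatrix id f).det = 0 := by
    obtain ⟨i, j, hfij, hij⟩ := Function.not_injective_iff.1 hf
    exact det_zero_of_column_eq hij fun k => by simp [hfij]
  rw [det_mul_eq_sum_det_submatrix_mul_prod, ← Finset.sum_filter_of_ne fun f _ h =>
    by_contra fun hf => h (by rw [hnoninj f hf, zero_mul]), sum_injective_eq_sum_Incr_sum_perm]
  refine Finset.sum_congr rfl fun g _ => ?_
  rw [det_apply' (B.submatrix g id), Finset.mul_sum]
  refine Finset.sum_congr rfl fun σ _ => ?_
  rw [show A.submatrix id (g ∘ σ) = (A.submatrix id g).submatrix id σ from rfl, det_permute']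
  simp only [submatrix_apply, id, Function.comp_apply]
  ring

end Determinant

theorem fin_one_fun_eq_vecCons {α : Type*} (f : Fin 1 → α) : f = ![f 0] := by
  ext i
  fin_cases i
  rfl

theorem powDF_apply (h : DF n 1 1) (p : ℕ) (x y : Fin p → EucV n) :
    powDF h p x y = p.factorial * (Matrix.of fun i j => h ![x i] ![y j]).det := by
  induction p with
  | zero => simp [powDF]
  | succ p ih =>
    set N : Matrix (Fin (p + 1)) (Fin (p + 1)) ℝ := Matrix.of fun i j => h ![x i] ![y j]
    have hlast (σ τ : Perm (Fin (p + 1))) :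
        h (fun i => x (σ (Fin.natAdd p i))) (fun j => y (τ (Fin.natAdd p j))) =
          N (σ (Fin.last p)) (τ (Fin.last p)) := by
      rw [fin_one_fun_eq_vecCons (fun i => x _), fin_one_fun_eq_vecCons (fun j => y _)]
      rfl
    calc powDF h (p + 1) x y
        = (p.factorial * p.factorial : ℝ)⁻¹ *
            ∑ σ : Perm (Fin (p + 1)), ∑ τ : Perm (Fin (p + 1)), sgn σ * sgn τ *
              (p.factorial * ((N.submatrix (σ ∘ Fin.castSucc) (τ ∘ Fin.castSucc)).det *
                N (σ (Fin.last p)) (τ (Fin.last p)))) := by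
          simp only [powDF, extMul, ih, hlast, Nat.factorial_one, Nat.cast_one, mul_one,
            mul_assoc]
          rfl
      _ = (p + 1).factorial * N.det := by
          simp only [mul_left_comm _ (p.factorial : ℝ), ← Finset.mul_sum, sgn]
          rw [sum_perm_sum_perm_sign_mul_det_submatrix_castSucc_mul_last]
          field_simp

theorem compDF_one_apply {q r : ℕ} (ω₁ : DF n 1 q) (ω₂ : DF n r 1) (u : Fin r → EucV n)
    (v : Fin q → EucV n) :
    compDF ω₁ ω₂ u v = ∑ m : Fin n, ω₂ u ![bv n m] * ω₁ ![bv n m] v := by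
  have hIncr : Incr n 1 = Finset.univ :=
    Finset.eq_univ_of_forall fun f => mem_Incr_iff.2 (Subsingleton.strictMono f)
  rw [compDF, hIncr]
  refine Fintype.sum_equiv (Equiv.funUnique (Fin 1) (Fin n)) _ _ fun f => ?_
  rw [fin_one_fun_eq_vecCons (fun i => bv n (f i))]
  rfl

/-- Greub–Vanstone: h^p ∘ k^p = p! (h∘k)^p for (1,1) double forms
h, k, where powers are exterior powers of double forms and ∘ is the
composition product. -/
theorem stmt0 (n p : ℕ) (h k : DF n 1 1) :
    compDF (powDF h p) (powDF k p) = (p.factorial : ℝ) • powDF (compDF h k) p := by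
  funext u v
  let A : Matrix (Fin p) (Fin n) ℝ := Matrix.of fun i m => k ![u i] ![bv n m]
  let B : Matrix (Fin n) (Fin p) ℝ := Matrix.of fun m j => h ![bv n m] ![v j]
  have hAB : A * B = Matrix.of fun i j => compDF h k ![u i] ![v j] := by
    ext i j
    simp [A, B, mul_apply, compDF_one_apply]
  calc compDF (powDF h p) (powDF k p) u v
      = ∑ g ∈ Incr n p,
          (p.factorial * (A.submatrix id g).det) * (p.factorial * (B.submatrix g id).det) := by
        simp only [compDF, powDF_apply]
        rfl
    _ = p.factorial * (p.factorial * (A * B).det) := by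
        rw [det_mul_eq_sum_Incr, Finset.mul_sum, Finset.mul_sum]
        exact Finset.sum_congr rfl fun g _ => by ring
    _ = ((p.factorial : ℝ) • powDF (compDF h k) p) u v := by
        rw [hAB, ← powDF_apply]
        rfl
end
end

section
/- For any (p,q) double form ω on an oriented n-dimensional Euclidean vector space, the double Hodge star of ω equals the interior product of ω against g^n/n!: *ω = i_ω(g^n/n!). -/
/-
Double forms on the Euclidean space ℝⁿ, following Labbi's formalism.
A (p,q) double form is modelled as a real-valued function of a p-tuple and a
q-tuple of vectors (the relevant ones being those multilinear and alternating
in each block, i.e. bilinear forms on Λ^p V × Λ^q V).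
-/

open scoped BigOperators RealInnerProductSpace

noncomputable section

variable {n : ℕ}

/-!
Both sides are sums over increasing multi-indices `I`, `J` of `ω(e_I, e_J)` times a
coefficient: `vol(e_I, x) vol(e_J, y)` for the Hodge star and `gⁿ(e_I x, e_J y) / n!` for the
interior product. So it suffices that `gⁿ(u, v) = n! det ⟪u i, v j⟫ = n! vol(u) vol(v)`.
The first equality holds for every power `gᵐ`: the exterior product of two antisymmetrized
forms is the antisymmetrization of their tensor product, so `gᵐ` is the antisymmetrization of
`∏ i, ⟪u i, v i⟫`, which is `m!` times the Gram determinant.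
-/

open Equiv Finset

lemma sgn_mul {m : ℕ} (σ τ : Perm (Fin m)) : sgn (σ * τ) = sgn σ * sgn τ := by
  simp [sgn, Perm.sign_mul]

lemma sgn_mul_self {m : ℕ} (σ : Perm (Fin m)) : sgn σ * sgn σ = 1 := by
  rw [sgn, ← Int.cast_mul, ← Units.val_mul, Int.units_mul_self, Units.val_one, Int.cast_one]

lemma sum_sgn_mul_mul_right {m : ℕ} (G : Perm (Fin m) → ℝ) (α : Perm (Fin m)) :
    ∑ σ, sgn σ * G (σ * α) = sgn α * ∑ σ, sgn σ * G σ := by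
  symm
  rw [mul_sum, ← Equiv.sum_comp (Equiv.mulRight α)]
  refine sum_congr rfl fun σ _ => ?_
  simp only [Equiv.coe_mulRight, sgn_mul]
  linear_combination (sgn σ * G (σ * α)) * sgn_mul_self α

def altSum {p q : ℕ} : DF n p q →ₗ[ℝ] DF n p q where
  toFun F x y :=
    ∑ σ : Perm (Fin p), ∑ τ : Perm (Fin q), sgn σ * sgn τ * F (x ∘ σ) (y ∘ τ)
  map_add' F G := by
    ext x y
    simp only [Pi.add_apply, mul_add, sum_add_distrib]
  map_smul' c F := by
    ext x y
    simp only [Pi.smul_apply, smul_eq_mul, RingHom.id_apply, mul_sum]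
    exact sum_congr rfl fun _ _ => sum_congr rfl fun _ _ => by ring

lemma altSum_apply {p q : ℕ} (F : DF n p q) (x : Fin p → EucV n) (y : Fin q → EucV n) :
    altSum F x y = ∑ σ, sgn σ * ∑ τ, sgn τ * F (x ∘ σ) (y ∘ τ) := by
  simp only [altSum, LinearMap.coe_mk, AddHom.coe_mk, mul_sum, mul_assoc]

lemma altSum_precomp {p q : ℕ} (F : DF n p q) (α : Perm (Fin p)) (β : Perm (Fin q)) :
    altSum (fun x y => F (x ∘ α) (y ∘ β)) = (sgn α * sgn β) • altSum F := by
  ext x y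
  let G : Perm (Fin p) → ℝ := fun σ => ∑ τ, sgn τ * F (x ∘ σ) (y ∘ τ)
  have inner (σ : Perm (Fin p)) :
      ∑ τ, sgn τ * F ((x ∘ σ) ∘ α) ((y ∘ τ) ∘ β) = sgn β * G (σ * α) :=
    sum_sgn_mul_mul_right (fun τ => F (x ∘ ⇑(σ * α)) (y ∘ τ)) β
  simp only [altSum_apply, Pi.smul_apply, smul_eq_mul, inner]
  rw [mul_comm (sgn α), mul_assoc, ← sum_sgn_mul_mul_right G α, mul_sum]
  exact sum_congr rfl fun σ _ => by ring

lemma altSum_eq_self_of_le_one {p q : ℕ} (hp : p ≤ 1) (hq : q ≤ 1) (F : DF n p q) :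
    altSum F = F := by
  have : Subsingleton (Fin p) := Fin.subsingleton_iff_le_one.2 hp
  have : Subsingleton (Fin q) := Fin.subsingleton_iff_le_one.2 hq
  ext x y
  simp [altSum_apply, sgn]

def finSumPerm {p r : ℕ} (α : Perm (Fin p)) (β : Perm (Fin r)) : Perm (Fin (p + r)) :=
  finSumFinEquiv.permCongr (α.sumCongr β)

@[simp]
lemma finSumPerm_comp_castAdd {p r : ℕ} (α : Perm (Fin p)) (β : Perm (Fin r)) :
    ⇑(finSumPerm α β) ∘ Fin.castAdd r = Fin.castAdd r ∘ α := by
  ext i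
  simp [finSumPerm, Equiv.permCongr_apply]

@[simp]
lemma finSumPerm_comp_natAdd {p r : ℕ} (α : Perm (Fin p)) (β : Perm (Fin r)) :
    ⇑(finSumPerm α β) ∘ Fin.natAdd p = Fin.natAdd p ∘ β := by
  ext i
  simp [finSumPerm, Equiv.permCongr_apply]

lemma sgn_finSumPerm {p r : ℕ} (α : Perm (Fin p)) (β : Perm (Fin r)) :
    sgn (finSumPerm α β) = sgn α * sgn β := by
  simp [sgn, finSumPerm, Perm.sign_permCongr, Perm.sign_sumCongr]

def tensorDF {p q r s : ℕ} (ω : DF n p q) (η : DF n r s) : DF n (p + r) (q + s) :=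
  fun x y =>
    ω (x ∘ Fin.castAdd r) (y ∘ Fin.castAdd s) * η (x ∘ Fin.natAdd p) (y ∘ Fin.natAdd q)

lemma extMul_eq_smul_altSum {p q r s : ℕ} (ω : DF n p q) (η : DF n r s) :
    extMul ω η =
      (p.factorial * r.factorial * q.factorial * s.factorial : ℝ)⁻¹ •
        altSum (tensorDF ω η) :=
  rfl

lemma tensorDF_altSum {p q r s : ℕ} (F : DF n p q) (G : DF n r s) :
    tensorDF (altSum F) (altSum G) =
      ∑ α, ∑ γ, ∑ β, ∑ δ, (sgn (finSumPerm α γ) * sgn (finSumPerm β δ)) •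
        fun x y => tensorDF F G (x ∘ finSumPerm α γ) (y ∘ finSumPerm β δ) := by
  ext x y
  simp only [tensorDF, altSum_apply, Finset.sum_apply, Pi.smul_apply, smul_eq_mul, sum_mul_sum]
  simp only [mul_sum, sum_mul, sgn_finSumPerm, Function.comp_assoc, finSumPerm_comp_castAdd,
    finSumPerm_comp_natAdd]
  refine sum_congr rfl fun _ _ => sum_congr rfl fun _ _ => ?_
  rw [sum_comm]
  exact sum_congr rfl fun _ _ => sum_congr rfl fun _ _ => by ring

lemma altSum_tensorDF_altSum {p q r s : ℕ} (F : DF n p q) (G : DF n r s) :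
    altSum (tensorDF (altSum F) (altSum G)) =
      (p.factorial * r.factorial * q.factorial * s.factorial : ℝ) • altSum (tensorDF F G) := by
  have hsq (A : Perm (Fin (p + r))) (B : Perm (Fin (q + s))) :
      (sgn A * sgn B) * (sgn A * sgn B) = 1 := by
    rw [mul_mul_mul_comm, sgn_mul_self, sgn_mul_self, one_mul]
  rw [tensorDF_altSum]
  simp only [map_sum, map_smul, altSum_precomp, smul_smul, hsq, one_smul, sum_const, card_univ,
    Fintype.card_perm, Fintype.card_fin, ← Nat.cast_smul_eq_nsmul ℝ]
  rw [← mul_assoc, ← mul_assoc]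

lemma extMul_altSum {p q r s : ℕ} (F : DF n p q) (G : DF n r s) :
    extMul (altSum F) (altSum G) = altSum (tensorDF F G) := by
  rw [extMul_eq_smul_altSum, altSum_tensorDF_altSum, smul_smul, inv_mul_cancel₀ (by positivity),
    one_smul]

def prodInner {m : ℕ} : DF n m m := fun x y => ∏ i, ⟪x i, y i⟫

lemma tensorDF_prodInner_gDF (m : ℕ) : tensorDF (prodInner (m := m)) (gDF n) = prodInner := by
  ext x y
  simp only [tensorDF, prodInner, gDF, Fin.prod_univ_castSucc]
  rfl

lemma powDF_gDF_eq_altSum (m : ℕ) : powDF (gDF n) m = altSum prodInner := by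
  induction m with
  | zero =>
    rw [altSum_eq_self_of_le_one zero_le_one zero_le_one]
    ext x y
    simp [powDF, prodInner]
  | succ m ih =>
    rw [powDF, ih, ← altSum_eq_self_of_le_one le_rfl le_rfl (gDF n), extMul_altSum,
      tensorDF_prodInner_gDF]

section gramDet

variable {E : Type*} [NormedAddCommGroup E] [InnerProductSpace ℝ E] {m : ℕ}

def gramDet (x y : Fin m → E) : ℝ := (Matrix.of fun i j => ⟪x i, y j⟫).det

lemma gramDet_eq_sum (x y : Fin m → E) :
    gramDet x y = ∑ τ, sgn τ * ∏ i, ⟪x i, y (τ i)⟫ := by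
  rw [gramDet, ← Matrix.det_transpose, Matrix.det_apply']
  rfl

lemma gramDet_comp_perm (x y : Fin m → E) (σ : Perm (Fin m)) :
    gramDet (x ∘ σ) y = sgn σ * gramDet x y :=
  Matrix.det_permute σ (Matrix.of fun i j => ⟪x i, y j⟫)

end gramDet

lemma altSum_prodInner {m : ℕ} (x y : Fin m → EucV n) :
    altSum prodInner x y = m.factorial * gramDet x y := by
  have row_expansion (σ : Perm (Fin m)) :
      ∑ τ, sgn τ * prodInner (x ∘ σ) (y ∘ τ) = gramDet (x ∘ σ) y :=
    (gramDet_eq_sum _ _).symm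
  simp only [altSum_apply, row_expansion, gramDet_comp_perm, ← mul_assoc, sgn_mul_self, one_mul,
    sum_const, card_univ, Fintype.card_perm, Fintype.card_fin, nsmul_eq_mul]

lemma gramDet_eq_volDF_mul_volDF (u v : Fin n → EucV n) :
    gramDet u v = volDF n u * volDF n v := by
  have hM : (Matrix.of fun i j => ⟪u i, v j⟫) =
      (Matrix.of fun i j => ⟪bv n i, u j⟫).transpose *
        Matrix.of fun i j => ⟪bv n i, v j⟫ := by
    ext i j
    simp [Matrix.mul_apply, bv, PiLp.inner_apply, mul_comm]
  rw [gramDet, hM, Matrix.det_mul, Matrix.det_transpose, volDF, volDF]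

lemma powDF_gDF_self_apply (u v : Fin n → EucV n) :
    powDF (gDF n) n u v = n.factorial * (volDF n u * volDF n v) := by
  rw [powDF_gDF_eq_altSum, altSum_prodInner, gramDet_eq_volDF_mul_volDF]

/-- for a (p,q) double form ω, *ω = i_ω(gⁿ/n!). -/
theorem stmt9 (n p q : ℕ) (hp : p ≤ n) (hq : q ≤ n) (ω : DF n p q) :
    starDF hp hq ω =
      interiorDF ω
        (castDF (show n = p + (n - p) by omega) (show n = q + (n - q) by omega)
          ((n.factorial : ℝ)⁻¹ • powDF (gDF n) n)) := by
  ext x y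
  refine sum_congr rfl fun _ _ => sum_congr rfl fun _ _ => ?_
  rw [castDF, Pi.smul_apply, Pi.smul_apply, smul_eq_mul, powDF_gDF_self_apply,
    inv_mul_cancel_left₀ (by positivity), mul_assoc]
end
end
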